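/- arXiv:2509.00504 — 6 statements merged into one kernel-verified Lean document; each statement's English description precedes it below -/
import Mathlib

section
/- Let M ∈ ℝⁿˣⁿ be symmetric positive definite with largest eigenvalue λ_max, let g ∈ ℝⁿ, let η = 1/λ_max, and define the dogleg path d(μ) = -ηg for μ ∈ (0,1] and d(μ) = -ηg + (μ-1)(-M⁻¹g + ηg) for μ ∈ (1,2]. Let s(x) = ⟨g,x⟩ + ½xᵀMx, so ∇s(x) = Mx + g. Then for every μ ∈ (0,2], ⟨d(μ), ∇s(d(μ))⟩ ≤ 0. -/
/-!
On the first leg the pairing `⟨d, Md + g⟩` at `d = -ηg` equals `η²⟨g, Mg⟩ - η‖g‖²`, which is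
nonpositive because `⟨g, Mg⟩ ≤ λ_max ‖g‖²` and `η λ_max = 1`. On the second leg, `d` runs along the
segment from `-ηg` to the Newton point `-M⁻¹g`, where the pairing vanishes. Since `M` is positive
semidefinite, `x ↦ ⟨x, Mx + g⟩` is convex, so on the segment it is bounded by its values at the
endpoints.
-/

open scoped Matrix MatrixOrder

theorem Matrix.IsHermitian.dotProduct_mulVec_le_iSup_eigenvalues {ι : Type*} [Fintype ι]
    [DecidableEq ι] {M : Matrix ι ι ℝ} (hM : M.IsHermitian) (x : ι → ℝ) :
    x ⬝ᵥ M *ᵥ x ≤ (⨆ i, hM.eigenvalues i) * (x ⬝ᵥ x) := by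
  have hle : M ≤ algebraMap ℝ _ (⨆ i, hM.eigenvalues i) := by
    refine le_algebraMap_of_spectrum_le (fun r hr => ?_) hM.isSelfAdjoint
    rw [hM.spectrum_real_eq_range_eigenvalues] at hr
    obtain ⟨i, rfl⟩ := hr
    exact le_ciSup (Set.finite_range _).bddAbove i
  simpa [Matrix.sub_mulVec, Algebra.algebraMap_eq_smul_one, Matrix.smul_mulVec, sub_nonneg]
    using (Matrix.le_iff.mp hle).dotProduct_mulVec_nonneg x

theorem Matrix.PosSemidef.convexOn_dotProduct_mulVec_add {ι : Type*} [Fintype ι]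
    {M : Matrix ι ι ℝ} (hM : M.PosSemidef) (g : ι → ℝ) :
    ConvexOn ℝ Set.univ fun x => x ⬝ᵥ (M *ᵥ x + g) := by
  refine ⟨convex_univ, fun x _ y _ a b ha hb hab => ?_⟩
  have hxy : 0 ≤ (x - y) ⬝ᵥ M *ᵥ (x - y) := by
    simpa using hM.dotProduct_mulVec_nonneg (x - y)
  obtain rfl : b = 1 - a := by linarith
  simp only [Matrix.mulVec_add, Matrix.mulVec_smul, Matrix.mulVec_sub, dotProduct_add,
    add_dotProduct, smul_dotProduct, dotProduct_smul, sub_dotProduct, dotProduct_sub,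
    smul_eq_mul] at hxy ⊢
  nlinarith [mul_nonneg ha hb]

theorem Matrix.IsHermitian.gradientStep_dotProduct_le_zero {ι : Type*} [Fintype ι]
    [DecidableEq ι] {M : Matrix ι ι ℝ} (hM : M.IsHermitian) (g : ι → ℝ) {η : ℝ}
    (hη : η = 1 / ⨆ i, hM.eigenvalues i) :
    -(η • g) ⬝ᵥ (M *ᵥ -(η • g) + g) ≤ 0 := by
  set L := ⨆ i, hM.eigenvalues i
  -- `η² L = η` also holds in the junk case `L = 0`, where `η = 0`.
  have hηL : η * η * L = η := by simpa [hη] using mul_self_mul_inv L⁻¹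
  have hRayleigh : η * η * (g ⬝ᵥ M *ᵥ g) ≤ η * (g ⬝ᵥ g) :=
    calc η * η * (g ⬝ᵥ M *ᵥ g)
        ≤ η * η * (L * (g ⬝ᵥ g)) := mul_le_mul_of_nonneg_left
          (hM.dotProduct_mulVec_le_iSup_eigenvalues g) (mul_self_nonneg η)
      _ = η * (g ⬝ᵥ g) := by rw [← mul_assoc, hηL]
  simp only [Matrix.mulVec_neg, Matrix.mulVec_smul, neg_dotProduct, dotProduct_add,
    dotProduct_neg, smul_dotProduct, dotProduct_smul, smul_eq_mul]
  linarith

theorem dogleg_descent_le_general {n : ℕ}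
    (M : Matrix (Fin n) (Fin n) ℝ) (hM : M.IsHermitian) (hpd : M.PosDef)
    (g : Fin n → ℝ) (η : ℝ) (hη : η = 1 / (⨆ i, hM.eigenvalues i))
    (d : ℝ → (Fin n → ℝ))
    (hd : ∀ μ : ℝ, d μ = if μ ≤ 1 then -(η • g)
      else -(η • g) + (μ - 1) • (-(M⁻¹.mulVec g) + η • g)) :
    ∀ μ ∈ Set.Ioc (0 : ℝ) 2, d μ ⬝ᵥ (M.mulVec (d μ) + g) ≤ 0 := by
  intro μ hμ
  have hgradient := hM.gradientStep_dotProduct_le_zero g hη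
  have hnewton : -(M⁻¹ *ᵥ g) ⬝ᵥ (M *ᵥ -(M⁻¹ *ᵥ g) + g) = 0 := by
    rw [Matrix.mulVec_neg, Matrix.mulVec_mulVec,
      M.mul_nonsing_inv ((M.isUnit_iff_isUnit_det).mp hpd.isUnit)]
    simp
  rw [hd μ]
  split_ifs with hμ1
  · exact hgradient
  · have hseg : -(η • g) + (μ - 1) • (-(M⁻¹ *ᵥ g) + η • g) ∈
        segment ℝ (-(η • g)) (-(M⁻¹ *ᵥ g)) := by
      rw [segment_eq_image']
      exact ⟨μ - 1, ⟨by linarith, by linarith [hμ.2]⟩, by rw [sub_neg_eq_add]⟩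
    exact ((hpd.posSemidef.convexOn_dotProduct_mulVec_add g).le_max_of_mem_segment
      trivial trivial hseg).trans (max_le hgradient hnewton.le)

/-- along the dogleg path with gradient step `η = 1/λ_max`,
the descent condition `⟨d(μ), ∇s(d(μ))⟩ ≤ 0` holds for all `μ ∈ (0,2]`,
where `s(x) = ⟨g,x⟩ + ½ xᵀMx` so that `∇s(x) = Mx + g`. -/
theorem dogleg_descent_le {n : ℕ} [NeZero n]
    (M : Matrix (Fin n) (Fin n) ℝ) (hM : M.IsHermitian) (hpd : M.PosDef)
    (g : Fin n → ℝ) (η : ℝ) (hη : η = 1 / (⨆ i, hM.eigenvalues i))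
    (d : ℝ → (Fin n → ℝ))
    (hd : ∀ μ : ℝ, d μ = if μ ≤ 1 then -(η • g)
      else -(η • g) + (μ - 1) • (-(M⁻¹.mulVec g) + η • g)) :
    ∀ μ ∈ Set.Ioc (0 : ℝ) 2, d μ ⬝ᵥ (M.mulVec (d μ) + g) ≤ 0 :=
  dogleg_descent_le_general M hM hpd g η hη d hd
end

section
/- In the dogleg setting with step size η_μ := -‖d(μ)‖²/⟨∇s(0), d(μ)⟩ where ∇s(0) = g and d(μ) is the dogleg path with d(μ) = -ηg + (μ-1)(-M⁻¹g + ηg) for μ ∈ [1,2], the function μ ↦ η_μ is nondecreasing on [1,2], provided g ≠ 0, M is symmetric positive definite, and 0 < η < 1/λ_max(M). -/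
/-!
Put `t = μ - 1` and `w = M⁻¹ g - η g`, so that `d(μ) = -(η g + t w)` and
`η_μ = N(t) / L(t)` with `N(t) = ‖η g + t w‖²` and `L(t) = ⟪g, η g + t w⟫`. Both are polynomials
in `t` whose coefficients are built from `‖g‖²`, `‖w‖²` and `⟪g, w⟫`, and
`N(b) L(a) - N(a) L(b) = (b - a) (η² ‖g‖² ⟪g, w⟫ + η ‖g‖² ‖w‖² (a + b) + a b ⟪g, w⟫ ‖w‖²)`,
so monotonicity reduces to `⟪g, w⟫ ≥ 0`, i.e. `η ‖g‖² ≤ ⟪g, M⁻¹ g⟫`. That holds because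
`η ≤ λ⁻¹` for every eigenvalue `λ` of `M`, which by the functional calculus means `η • 1 ≤ M⁻¹`
in the Loewner order.
-/

open scoped Matrix MatrixOrder RealInnerProductSpace
open Matrix

theorem Matrix.PosDef.algebraMap_le_inv {ι : Type*} [Fintype ι] [DecidableEq ι]
    {M : Matrix ι ι ℝ} (hM : M.PosDef) {r : ℝ}
    (hr : ∀ i, r ≤ (hM.isHermitian.eigenvalues i)⁻¹) :
    algebraMap ℝ (Matrix ι ι ℝ) r ≤ M⁻¹ := by
  have hinv : M⁻¹ = cfc (fun x : ℝ ↦ x⁻¹) M := by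
    rw [cfc_ringInverse_id M hM.isUnit, nonsing_inv_eq_ringInverse]
  rw [hinv, algebraMap_le_cfc_iff _ _ _ (M.finite_real_spectrum.continuousOn _),
    hM.isHermitian.spectrum_real_eq_range_eigenvalues]
  rintro _ ⟨i, rfl⟩
  exact hr i

theorem Matrix.PosDef.mul_dotProduct_le_dotProduct_inv_mulVec {ι : Type*} [Fintype ι]
    [DecidableEq ι] {M : Matrix ι ι ℝ} (hM : M.PosDef) {r : ℝ}
    (hr : ∀ i, r ≤ (hM.isHermitian.eigenvalues i)⁻¹) (x : ι → ℝ) :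
    r * (x ⬝ᵥ x) ≤ x ⬝ᵥ (M⁻¹ *ᵥ x) := by
  have := (le_iff.mp (hM.algebraMap_le_inv hr)).dotProduct_mulVec_nonneg x
  simpa [sub_mulVec, Algebra.algebraMap_eq_smul_one, smul_mulVec] using this

theorem monotoneOn_norm_sq_div_inner_smul_add_smul {E : Type*} [NormedAddCommGroup E]
    [InnerProductSpace ℝ E] {η : ℝ} (hη : 0 < η) {g w : E} (hg : g ≠ 0)
    (hgw : 0 ≤ ⟪g, w⟫) :
    MonotoneOn (fun t : ℝ ↦ ‖η • g + t • w‖ ^ 2 / ⟪g, η • g + t • w⟫) (Set.Ici 0) := by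
  intro a (ha : 0 ≤ a) b (hb : 0 ≤ b) hab
  have hnorm (t : ℝ) :
      ‖η • g + t • w‖ ^ 2 = η ^ 2 * ‖g‖ ^ 2 + 2 * η * t * ⟪g, w⟫ + t ^ 2 * ‖w‖ ^ 2 := by
    rw [norm_add_sq_real, norm_smul, norm_smul, inner_smul_left, inner_smul_right]
    simp only [Real.norm_eq_abs, abs_of_pos hη, mul_pow, sq_abs, conj_trivial]
    ring
  have hinner (t : ℝ) : ⟪g, η • g + t • w⟫ = η * ‖g‖ ^ 2 + t * ⟪g, w⟫ := by
    rw [inner_add_right, inner_smul_right, inner_smul_right, real_inner_self_eq_norm_sq]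
  have hg2 : 0 < ‖g‖ ^ 2 := by positivity
  simp only [hnorm, hinner]
  rw [div_le_div_iff₀ (by positivity) (by positivity), ← sub_nonneg]
  set c := ⟪g, w⟫
  have cross : (η ^ 2 * ‖g‖ ^ 2 + 2 * η * b * c + b ^ 2 * ‖w‖ ^ 2) * (η * ‖g‖ ^ 2 + a * c)
      - (η ^ 2 * ‖g‖ ^ 2 + 2 * η * a * c + a ^ 2 * ‖w‖ ^ 2) * (η * ‖g‖ ^ 2 + b * c)
      = (b - a) * (η ^ 2 * ‖g‖ ^ 2 * c + η * ‖g‖ ^ 2 * ‖w‖ ^ 2 * (a + b)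
          + a * b * c * ‖w‖ ^ 2) := by
    ring
  rw [cross]
  exact mul_nonneg (sub_nonneg.2 hab) (by positivity)

theorem dogleg_stepsize_monotone_general {n : ℕ}
    (M : Matrix (Fin n) (Fin n) ℝ) (hM : M.IsHermitian) (hpd : M.PosDef)
    (g : Fin n → ℝ) (hg : g ≠ 0)
    (η : ℝ) (hη : η ∈ Set.Ioo (0 : ℝ) (1 / (⨆ i, hM.eigenvalues i)))
    (d : ℝ → (Fin n → ℝ))
    (hd : ∀ μ ∈ Set.Icc (1 : ℝ) 2,
      d μ = -(η • g) + (μ - 1) • (-(M⁻¹.mulVec g) + η • g))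
    (ημ : ℝ → ℝ)
    (hημ : ∀ μ ∈ Set.Icc (1 : ℝ) 2, ημ μ = -(d μ ⬝ᵥ d μ) / (g ⬝ᵥ d μ)) :
    MonotoneOn ημ (Set.Icc (1 : ℝ) 2) := by
  have hη_le (i : Fin n) : η ≤ (hpd.isHermitian.eigenvalues i)⁻¹ := by
    have hsup : hM.eigenvalues i ≤ ⨆ j, hM.eigenvalues j :=
      le_ciSup (Set.finite_range _).bddAbove i
    exact (hη.2.trans_eq (one_div _)).le.trans (inv_anti₀ (hpd.eigenvalues_pos i) hsup)
  have hdot (x y : Fin n → ℝ) : ⟪WithLp.toLp 2 x, WithLp.toLp 2 y⟫ = x ⬝ᵥ y := by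
    rw [EuclideanSpace.inner_toLp_toLp, star_trivial, dotProduct_comm]
  set w := M⁻¹ *ᵥ g - η • g
  have hgw : 0 ≤ ⟪WithLp.toLp 2 g, WithLp.toLp 2 w⟫ := by
    rw [hdot, dotProduct_sub, dotProduct_smul, smul_eq_mul, sub_nonneg]
    exact hpd.mul_dotProduct_le_dotProduct_inv_mulVec hη_le g
  have hφ := monotoneOn_norm_sq_div_inner_smul_add_smul hη.1 (by simpa using hg) hgw
  refine (hφ.comp (fun a _ b _ hab ↦ sub_le_sub_right hab 1)
    fun μ hμ ↦ sub_nonneg.2 hμ.1).congr fun μ hμ ↦ ?_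
  have hdμ : d μ = -(η • g + (μ - 1) • w) := by rw [hd μ hμ]; module
  simp only [Function.comp_apply, hημ μ hμ, hdμ, ← real_inner_self_eq_norm_sq,
    ← WithLp.toLp_smul, ← WithLp.toLp_add, hdot]
  rw [neg_dotProduct_neg, dotProduct_neg, neg_div_neg_eq]

/-- Lemma 3.2: the step size `η_μ = -‖d(μ)‖²/⟨g, d(μ)⟩` is a
nondecreasing function of `μ` on `[1,2]`, where
`d(μ) = -ηg + (μ-1)(-M⁻¹g + ηg)`. -/
theorem dogleg_stepsize_monotone {n : ℕ} [NeZero n]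
    (M : Matrix (Fin n) (Fin n) ℝ) (hM : M.IsHermitian) (hpd : M.PosDef)
    (g : Fin n → ℝ) (hg : g ≠ 0)
    (η : ℝ) (hη : η ∈ Set.Ioo (0 : ℝ) (1 / (⨆ i, hM.eigenvalues i)))
    (d : ℝ → (Fin n → ℝ))
    (hd : ∀ μ ∈ Set.Icc (1 : ℝ) 2,
      d μ = -(η • g) + (μ - 1) • (-(M⁻¹.mulVec g) + η • g))
    (ημ : ℝ → ℝ)
    (hημ : ∀ μ ∈ Set.Icc (1 : ℝ) 2, ημ μ = -(d μ ⬝ᵥ d μ) / (g ⬝ᵥ d μ)) :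
    MonotoneOn ημ (Set.Icc (1 : ℝ) 2) :=
  dogleg_stepsize_monotone_general M hM hpd g hg η hη d hd ημ hημ
end

section
/- Let M be symmetric positive definite with eigenvalues bounded in [λ_min, λ_max] with λ_min > 0, g ∈ ℝⁿ nonzero, η ∈ (0, 1/λ_max). Then the step sizes η_μ = -‖d(μ)‖²/⟨g, d(μ)⟩, for μ ranging over (1,2], are bounded above by a finite constant depending only on η, λ_min, λ_max (and not on μ or g). -/
/-!
Write `x = M⁻¹ g` and `t = μ - 1 ∈ (0, 1]`, so that `d(μ) = -((1 - t) η g + t x)` is minus a convex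
combination of `η g` and `x`. Since the spectrum of `M` lies in `[λ_min, λ_max]`, we have
`λ_min ‖x‖ ≤ ‖g‖` and `‖g‖² ≤ λ_max ⟨x, g⟩`. With `η λ_max < 1` the second gives
`-⟨g, d(μ)⟩ ≥ η ‖g‖²`, while convexity of `‖·‖²` together with `η ≤ 1 / λ_min` gives
`‖d(μ)‖² ≤ ‖g‖² / λ_min²`. Hence `η_μ ≤ 1 / (η λ_min²)`.
-/

open Matrix
open scoped Matrix

theorem Matrix.star_mulVec_dotProduct_star_mulVec {n : Type*} [Fintype n] [DecidableEq n]
    {U : Matrix n n ℝ} (hU : U ∈ unitaryGroup n ℝ) (y z : n → ℝ) :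
    (star U *ᵥ y) ⬝ᵥ (star U *ᵥ z) = y ⬝ᵥ z := by
  rw [star_eq_conjTranspose, conjTranspose_eq_transpose_of_trivial, mulVec_transpose,
    dotProduct_mulVec, vecMul_vecMul, ← conjTranspose_eq_transpose_of_trivial,
    ← star_eq_conjTranspose, Unitary.mul_star_self_of_mem hU, vecMul_one]

theorem Matrix.dotProduct_convexComb_self_le {n : Type*} [Fintype n] {t : ℝ} (ht₀ : 0 ≤ t)
    (ht₁ : t ≤ 1) (u v : n → ℝ) :
    ((1 - t) • u + t • v) ⬝ᵥ ((1 - t) • u + t • v) ≤ (1 - t) * (u ⬝ᵥ u) + t * (v ⬝ᵥ v) := by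
  have h := dotProduct_self_star_nonneg (u - v)
  rw [star_trivial] at h
  simp only [add_dotProduct, dotProduct_add, smul_dotProduct, dotProduct_smul, sub_dotProduct,
    dotProduct_sub, smul_eq_mul, dotProduct_comm v u] at h ⊢
  nlinarith [mul_nonneg (mul_nonneg ht₀ (sub_nonneg.2 ht₁)) h]

namespace Matrix.IsHermitian

variable {n : Type*} [Fintype n] [DecidableEq n] {M : Matrix n n ℝ} (hM : M.IsHermitian)

theorem star_eigenvectorUnitary_mul_self :
    star (hM.eigenvectorUnitary : Matrix n n ℝ) * M =
      diagonal hM.eigenvalues * star (hM.eigenvectorUnitary : Matrix n n ℝ) := by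
  have hdiag := hM.conjStarAlgAut_star_eigenvectorUnitary
  rw [Unitary.conjStarAlgAut_apply, RCLike.ofReal_real_eq_id, Function.id_comp] at hdiag
  simp only [Unitary.coe_star, star_star] at hdiag
  rw [← hdiag, mul_assoc, mul_assoc, Unitary.mul_star_self_of_mem hM.eigenvectorUnitary.2,
    mul_one]

theorem star_eigenvectorUnitary_mulVec_mulVec (x : n → ℝ) (i : n) :
    (star (hM.eigenvectorUnitary : Matrix n n ℝ) *ᵥ (M *ᵥ x)) i =
      hM.eigenvalues i * (star (hM.eigenvectorUnitary : Matrix n n ℝ) *ᵥ x) i := by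
  rw [mulVec_mulVec, star_eigenvectorUnitary_mul_self, ← mulVec_mulVec, mulVec_diagonal]

theorem sq_mul_dotProduct_self_le {a : ℝ} (ha : 0 ≤ a) (hle : ∀ i, a ≤ hM.eigenvalues i)
    (x : n → ℝ) : a ^ 2 * (x ⬝ᵥ x) ≤ (M *ᵥ x) ⬝ᵥ (M *ᵥ x) := by
  have hU := star_mulVec_dotProduct_star_mulVec hM.eigenvectorUnitary.2
  rw [← hU x x, ← hU (M *ᵥ x) (M *ᵥ x), dotProduct, dotProduct, Finset.mul_sum]
  refine Finset.sum_le_sum fun i _ ↦ ?_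
  rw [star_eigenvectorUnitary_mulVec_mulVec]
  nlinarith [mul_le_mul_of_nonneg_right (pow_le_pow_left₀ ha (hle i) 2)
    (mul_self_nonneg ((star (hM.eigenvectorUnitary : Matrix n n ℝ) *ᵥ x) i))]

theorem mulVec_dotProduct_mulVec_le {b : ℝ} (hnonneg : ∀ i, 0 ≤ hM.eigenvalues i)
    (hle : ∀ i, hM.eigenvalues i ≤ b) (x : n → ℝ) :
    (M *ᵥ x) ⬝ᵥ (M *ᵥ x) ≤ b * (x ⬝ᵥ M *ᵥ x) := by
  have hU := star_mulVec_dotProduct_star_mulVec hM.eigenvectorUnitary.2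
  rw [← hU x (M *ᵥ x), ← hU (M *ᵥ x) (M *ᵥ x), dotProduct, dotProduct, Finset.mul_sum]
  refine Finset.sum_le_sum fun i _ ↦ ?_
  rw [star_eigenvectorUnitary_mulVec_mulVec]
  nlinarith [mul_nonneg (mul_nonneg (sub_nonneg.2 (hle i)) (hnonneg i))
    (mul_self_nonneg ((star (hM.eigenvectorUnitary : Matrix n n ℝ) *ᵥ x) i))]

end Matrix.IsHermitian

theorem dogleg_ratio_le {n : Type*} [Fintype n] {a b η t : ℝ} {g x : n → ℝ} (ha : 0 < a)
    (hab : a ≤ b) (hη : 0 < η) (hηb : η * b ≤ 1) (ht₀ : 0 ≤ t) (ht₁ : t ≤ 1) (hg : g ≠ 0)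
    (hx : a ^ 2 * (x ⬝ᵥ x) ≤ g ⬝ᵥ g) (hgx : g ⬝ᵥ g ≤ b * (x ⬝ᵥ g)) :
    ((1 - t) • (η • g) + t • x) ⬝ᵥ ((1 - t) • (η • g) + t • x) /
        (g ⬝ᵥ ((1 - t) • (η • g) + t • x)) ≤ 1 / (η * a ^ 2) := by
  have hG : 0 < g ⬝ᵥ g := by simpa using dotProduct_self_star_pos_iff.2 hg
  have hxg : η * (g ⬝ᵥ g) ≤ x ⬝ᵥ g := by nlinarith
  have hden : η * (g ⬝ᵥ g) ≤ g ⬝ᵥ ((1 - t) • (η • g) + t • x) := by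
    simp only [dotProduct_add, dotProduct_smul, smul_eq_mul, dotProduct_comm g x]
    nlinarith
  have hnum : a ^ 2 * (((1 - t) • (η • g) + t • x) ⬝ᵥ ((1 - t) • (η • g) + t • x)) ≤ g ⬝ᵥ g := by
    have hconv := dotProduct_convexComb_self_le ht₀ ht₁ (η • g) x
    simp only [smul_dotProduct, dotProduct_smul, smul_eq_mul] at hconv
    have haη : (a * η) ^ 2 ≤ 1 := pow_le_one₀ (by positivity) (by nlinarith)
    nlinarith [mul_le_mul_of_nonneg_left hconv (sq_nonneg a),
      mul_le_mul_of_nonneg_right haη (mul_nonneg (sub_nonneg.2 ht₁) hG.le),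
      mul_le_mul_of_nonneg_left hx ht₀]
  rw [div_le_div_iff₀ (by nlinarith) (by positivity)]
  calc _ = η * (a ^ 2 * (((1 - t) • (η • g) + t • x) ⬝ᵥ ((1 - t) • (η • g) + t • x))) := by ring
    _ ≤ η * (g ⬝ᵥ g) := by gcongr
    _ ≤ _ := hden
    _ = _ := (one_mul _).symm

theorem dogleg_stepsize_bounded_general {n : ℕ} (η lammin lammax : ℝ)
    (hlam : 0 < lammin) (hη : η ∈ Set.Ioo (0 : ℝ) (1 / lammax)) :
    ∃ B : ℝ, ∀ (M : Matrix (Fin n) (Fin n) ℝ) (hM : M.IsHermitian),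
      M.PosDef → (∀ i, lammin ≤ hM.eigenvalues i) →
      (∀ i, hM.eigenvalues i ≤ lammax) →
      ∀ (g : Fin n → ℝ), g ≠ 0 → ∀ μ ∈ Set.Ioc (1 : ℝ) 2,
        -((-(η • g) + (μ - 1) • (-(M⁻¹.mulVec g) + η • g)) ⬝ᵥ
            (-(η • g) + (μ - 1) • (-(M⁻¹.mulVec g) + η • g))) /
          (g ⬝ᵥ (-(η • g) + (μ - 1) • (-(M⁻¹.mulVec g) + η • g))) ≤ B := by
  refine ⟨1 / (η * lammin ^ 2), fun M hM hpd hmin hmax g hg μ ⟨hμ₁, hμ₂⟩ ↦ ?_⟩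
  obtain ⟨i, -⟩ := Function.ne_iff.mp hg
  have hab : lammin ≤ lammax := (hmin i).trans (hmax i)
  have hηb : η * lammax ≤ 1 := ((lt_div_iff₀ (hlam.trans_le hab)).mp hη.2).le
  set x := M⁻¹ *ᵥ g
  have hMx : M *ᵥ x = g := by
    rw [mulVec_mulVec, mul_nonsing_inv _ ((isUnit_iff_isUnit_det M).mp hpd.isUnit), one_mulVec]
  have hx := hM.sq_mul_dotProduct_self_le hlam.le hmin x
  have hgx := hM.mulVec_dotProduct_mulVec_le (fun j ↦ hlam.le.trans (hmin j)) hmax x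
  rw [hMx] at hx hgx
  have hd : -(η • g) + (μ - 1) • (-x + η • g) = -((1 - (μ - 1)) • (η • g) + (μ - 1) • x) := by
    module
  rw [hd, neg_dotProduct, dotProduct_neg, neg_neg, dotProduct_neg, neg_div_neg_eq]
  exact dogleg_ratio_le hlam hab hη.1 hηb (by linarith) (by linarith) hg hx hgx

/-- Lemma 3.3: the dogleg step sizes
`η_μ = -‖d(μ)‖²/⟨g, d(μ)⟩`, for `μ ∈ (1,2]`, are bounded above by a
finite constant depending only on `η`, `λ_min`, `λ_max` (not on `μ` or `g`). -/
theorem dogleg_stepsize_bounded {n : ℕ} [NeZero n] (η lammin lammax : ℝ)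
    (hlam : 0 < lammin) (hη : η ∈ Set.Ioo (0 : ℝ) (1 / lammax)) :
    ∃ B : ℝ, ∀ (M : Matrix (Fin n) (Fin n) ℝ) (hM : M.IsHermitian),
      M.PosDef → (∀ i, lammin ≤ hM.eigenvalues i) →
      (∀ i, hM.eigenvalues i ≤ lammax) →
      ∀ (g : Fin n → ℝ), g ≠ 0 → ∀ μ ∈ Set.Ioc (1 : ℝ) 2,
        -((-(η • g) + (μ - 1) • (-(M⁻¹.mulVec g) + η • g)) ⬝ᵥ
            (-(η • g) + (μ - 1) • (-(M⁻¹.mulVec g) + η • g))) /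
          (g ⬝ᵥ (-(η • g) + (μ - 1) • (-(M⁻¹.mulVec g) + η • g))) ≤ B :=
  dogleg_stepsize_bounded_general η lammin lammax hlam hη
end

section
/- Let d = d(μ) be a dogleg direction with ⟨g,d⟩ < 0, M symmetric positive definite, and suppose dᵀMd + ⟨g,d⟩ ≤ 0. Define s̄(β) = β⟨g,d⟩ + (β²/2)dᵀMd and m̄_μ(β) = ⟨g_μ, βd⟩ + (β²/(2η_μ))‖d‖² with g_μ = (⟨g,d⟩/‖d‖²)d and η_μ = -‖d‖²/⟨g,d⟩. Then β = 1 is the unique minimizer of m̄_μ and 1 ≤ argmin_β s̄(β); consequently s̄(β) ≤ m̄_μ(β) for all β ∈ ℝ. -/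
/-!
Along the line `β ↦ β • d` both models are one-dimensional quadratics `β * a + β ^ 2 / 2 * c`
with the same slope `a = ⟨g, d⟩ < 0`: the objective has curvature `dᵀMd`, while the choice of
`g_μ` and `η_μ` gives the surrogate curvature `-a`. A quadratic of curvature `-a` and slope `a`
is `a / 2 * (1 - (β - 1) ^ 2)`, minimized exactly at `1`; the descent condition `dᵀMd ≤ -a`
says the objective is the flatter of the two, so it lies below the surrogate, and its
minimizer `-a / dᵀMd` (Fermat's rule, which also forces positive curvature) is at least `1`.
-/

open scoped Matrix

noncomputable def lineQuadratic (a c β : ℝ) : ℝ := β * a + β ^ 2 / 2 * c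

lemma lineQuadratic_eq_of_slope_eq_zero {a c β₀ : ℝ} (h : a + β₀ * c = 0) (β : ℝ) :
    lineQuadratic a c β = lineQuadratic a c β₀ + c / 2 * (β - β₀) ^ 2 := by
  have ha : a = -(β₀ * c) := by linarith
  simp only [lineQuadratic, ha]
  ring

lemma lineQuadratic_lt_of_ne {a c β₀ β : ℝ} (h : a + β₀ * c = 0) (hc : 0 < c) (hβ : β ≠ β₀) :
    lineQuadratic a c β₀ < lineQuadratic a c β := by
  rw [lineQuadratic_eq_of_slope_eq_zero h β, lt_add_iff_pos_right]
  exact mul_pos (half_pos hc) (pow_two_pos_of_ne_zero (sub_ne_zero.mpr hβ))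

lemma lineQuadratic_le_of_curvature_le (a : ℝ) {c c' : ℝ} (hc : c ≤ c') (β : ℝ) :
    lineQuadratic a c β ≤ lineQuadratic a c' β := by
  unfold lineQuadratic
  gcongr

lemma hasDerivAt_lineQuadratic (a c β : ℝ) :
    HasDerivAt (lineQuadratic a c) (a + β * c) β :=
  (((hasDerivAt_id β).mul_const a).add (((hasDerivAt_pow 2 β).div_const 2).mul_const c)).congr_deriv
    (by simp)

lemma slope_eq_zero_and_curvature_nonneg_of_isMinOn {a c β₀ : ℝ}
    (h : IsMinOn (lineQuadratic a c) Set.univ β₀) : a + β₀ * c = 0 ∧ 0 ≤ c := by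
  have hslope : a + β₀ * c = 0 :=
    (h.isLocalMin Filter.univ_mem).hasDerivAt_eq_zero (hasDerivAt_lineQuadratic a c β₀)
  refine ⟨hslope, ?_⟩
  have := h (Set.mem_univ (β₀ + 1))
  rw [Set.mem_ofPred_eq, lineQuadratic_eq_of_slope_eq_zero hslope (β₀ + 1)] at this
  linarith

lemma one_le_of_isMinOn_lineQuadratic {a c β₀ : ℝ} (ha : a < 0) (hc : c + a ≤ 0)
    (h : IsMinOn (lineQuadratic a c) Set.univ β₀) : 1 ≤ β₀ := by
  obtain ⟨hslope, hc₀⟩ := slope_eq_zero_and_curvature_nonneg_of_isMinOn h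
  have hcpos : 0 < c := hc₀.lt_of_ne (by rintro rfl; linarith)
  exact le_of_mul_le_mul_right (by linarith) hcpos

lemma dotProduct_smul_div_self {n : ℕ} (a : ℝ) {d : Fin n → ℝ} (hd : d ⬝ᵥ d ≠ 0) :
    (a / (d ⬝ᵥ d)) • d ⬝ᵥ d = a := by
  rw [smul_dotProduct, smul_eq_mul, div_mul_cancel₀ _ hd]

theorem dogleg_argmin_comparison_general {n : ℕ}
    (M : Matrix (Fin n) (Fin n) ℝ)
    (g d : Fin n → ℝ) (hgd : g ⬝ᵥ d < 0)
    (hdesc : d ⬝ᵥ M.mulVec d + g ⬝ᵥ d ≤ 0)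
    (gμ : Fin n → ℝ) (hgμ : gμ = ((g ⬝ᵥ d) / (d ⬝ᵥ d)) • d)
    (ημ : ℝ) (hημ : ημ = -(d ⬝ᵥ d) / (g ⬝ᵥ d))
    (sbar mbar : ℝ → ℝ)
    (hs : ∀ β : ℝ, sbar β = β * (g ⬝ᵥ d) + β ^ 2 / 2 * (d ⬝ᵥ M.mulVec d))
    (hm : ∀ β : ℝ, mbar β = β * (gμ ⬝ᵥ d) + β ^ 2 / (2 * ημ) * (d ⬝ᵥ d)) :
    (∀ β : ℝ, β ≠ 1 → mbar 1 < mbar β) ∧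
      (∀ βs : ℝ, (∀ β : ℝ, sbar βs ≤ sbar β) → 1 ≤ βs) ∧
      ∀ β : ℝ, sbar β ≤ mbar β := by
  have hdd : d ⬝ᵥ d ≠ 0 := by
    rintro hdd
    rw [dotProduct_self_eq_zero.mp hdd, dotProduct_zero] at hgd
    exact hgd.false
  set a := g ⬝ᵥ d
  have hsbar : sbar = lineQuadratic a (d ⬝ᵥ M *ᵥ d) := funext hs
  have hmbar : mbar = lineQuadratic a (-a) := by
    ext β
    rw [hm, hgμ, hημ, dotProduct_smul_div_self a hdd, lineQuadratic]
    field_simp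
  subst hsbar hmbar
  refine ⟨fun β hβ ↦ lineQuadratic_lt_of_ne (by ring) (by linarith) hβ,
    fun βs hβs ↦ one_le_of_isMinOn_lineQuadratic hgd hdesc fun β _ ↦ hβs β,
    lineQuadratic_le_of_curvature_le a (by linarith)⟩

/-- Lemma 3.6: under the descent condition
`dᵀMd + ⟨g,d⟩ ≤ 0`, the point `β = 1` is the unique minimizer of the
restricted surrogate `m̄_μ`, every minimizer of the restricted objective `s̄`
is `≥ 1`, and consequently `s̄(β) ≤ m̄_μ(β)` for all `β`. -/
theorem dogleg_argmin_comparison {n : ℕ} [NeZero n]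
    (M : Matrix (Fin n) (Fin n) ℝ) (hM : M.IsHermitian) (hpd : M.PosDef)
    (g d : Fin n → ℝ) (hgd : g ⬝ᵥ d < 0)
    (hdesc : d ⬝ᵥ M.mulVec d + g ⬝ᵥ d ≤ 0)
    (gμ : Fin n → ℝ) (hgμ : gμ = ((g ⬝ᵥ d) / (d ⬝ᵥ d)) • d)
    (ημ : ℝ) (hημ : ημ = -(d ⬝ᵥ d) / (g ⬝ᵥ d))
    (sbar mbar : ℝ → ℝ)
    (hs : ∀ β : ℝ, sbar β = β * (g ⬝ᵥ d) + β ^ 2 / 2 * (d ⬝ᵥ M.mulVec d))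
    (hm : ∀ β : ℝ, mbar β = β * (gμ ⬝ᵥ d) + β ^ 2 / (2 * ημ) * (d ⬝ᵥ d)) :
    (∀ β : ℝ, β ≠ 1 → mbar 1 < mbar β) ∧
      (∀ βs : ℝ, (∀ β : ℝ, sbar βs ≤ sbar β) → 1 ≤ βs) ∧
      ∀ β : ℝ, sbar β ≤ mbar β :=
  dogleg_argmin_comparison_general M g d hgd hdesc gμ hgμ ημ hημ sbar mbar hs hm
end

section
/- (Opportunistic majorization along the dogleg line) For any μ ∈ (1,2], with M symmetric positive definite, g ≠ 0, η ∈ (0, 1/λ_max(M)), s(x) = ⟨g,x⟩ + ½xᵀMx, d = d(μ) the dogleg direction, g_μ = (⟨g,d⟩/‖d‖²)d, η_μ = -‖d‖²/⟨g,d⟩, and m_μ(x) = ⟨g_μ,x⟩ + (1/(2η_μ))‖x‖², it holds that s(x) ≤ m_μ(x) for every x on the line {βd : β ∈ ℝ}. -/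
/-!
On the line `β • d`, with `d = d(μ)`, the quadratic `s` and the surrogate `m_μ` have the same
linear coefficient `β ⟨g, d⟩` (`g_μ` is the projection of `g` onto `d`), while their quadratic
coefficients are `β² ⟨d, M d⟩ / 2` and `-β² ⟨g, d⟩ / 2`. So it suffices that `⟨g, d⟩ < 0` and
`⟨d, g + M d⟩ ≤ 0`. Writing `d = -(2 - μ) η g - (μ - 1) M⁻¹ g`,
`⟨d, g + M d⟩ = (2 - μ) ((2 - μ) η (η gᵀMg - ‖g‖²) + (μ - 1) (η ‖g‖² - gᵀM⁻¹g))`,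
and both brackets are nonpositive because `η M ≤ 1`: the first directly, the second via
Cauchy–Schwarz for the form of `M`, `‖g‖⁴ ≤ (gᵀM⁻¹g) (gᵀMg)`.
-/

open scoped Matrix

namespace Matrix

variable {ι : Type*} [Fintype ι]

theorem IsSymm.dotProduct_mulVec_comm {R : Type*} [CommSemiring R] {A : Matrix ι ι R}
    (hA : A.IsSymm) (x y : ι → R) : x ⬝ᵥ A *ᵥ y = y ⬝ᵥ A *ᵥ x := by
  rw [dotProduct_mulVec, ← mulVec_transpose, hA.eq, dotProduct_comm]

variable [DecidableEq ι]

theorem mulVec_nonsing_inv_mulVec {R : Type*} [CommRing R] {A : Matrix ι ι R}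
    (hA : IsUnit A.det) (x : ι → R) : A *ᵥ A⁻¹ *ᵥ x = x := by
  rw [mulVec_mulVec, mul_nonsing_inv _ hA, one_mulVec]

theorem IsHermitian.dotProduct_mulVec_le_iSup_eigenvalues_s8 {A : Matrix ι ι ℝ} (hA : A.IsHermitian)
    (x : ι → ℝ) : x ⬝ᵥ A *ᵥ x ≤ (⨆ i, hA.eigenvalues i) * (x ⬝ᵥ x) := by
  open scoped MatrixOrder in
  have hle : A ≤ algebraMap ℝ _ (⨆ i, hA.eigenvalues i) := by
    refine le_algebraMap_of_spectrum_le fun r hr => ?_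
    rw [hA.spectrum_real_eq_range_eigenvalues] at hr
    obtain ⟨i, rfl⟩ := hr
    exact le_ciSup (Set.finite_range _).bddAbove i
  simpa only [star_trivial, Algebra.algebraMap_eq_smul_one, sub_mulVec, smul_mulVec, one_mulVec,
    dotProduct_sub, dotProduct_smul, smul_eq_mul, sub_nonneg] using
    (le_iff.mp hle).dotProduct_mulVec_nonneg x

theorem IsHermitian.mul_dotProduct_mulVec_le_dotProduct_self {A : Matrix ι ι ℝ}
    (hA : A.IsHermitian) {η : ℝ} (hη : 0 ≤ η) (hηA : η * (⨆ i, hA.eigenvalues i) ≤ 1)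
    (x : ι → ℝ) : η * (x ⬝ᵥ A *ᵥ x) ≤ x ⬝ᵥ x := by
  have hx : 0 ≤ x ⬝ᵥ x := by simpa using dotProduct_self_star_nonneg x
  calc η * (x ⬝ᵥ A *ᵥ x) ≤ η * ((⨆ i, hA.eigenvalues i) * (x ⬝ᵥ x)) :=
        mul_le_mul_of_nonneg_left (hA.dotProduct_mulVec_le_iSup_eigenvalues_s8 x) hη
    _ = (η * ⨆ i, hA.eigenvalues i) * (x ⬝ᵥ x) := by ring
    _ ≤ x ⬝ᵥ x := mul_le_of_le_one_left hx hηA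

theorem PosDef.sq_dotProduct_self_le {M : Matrix ι ι ℝ} (hM : M.PosDef) (g : ι → ℝ) :
    (g ⬝ᵥ g) ^ 2 ≤ (g ⬝ᵥ M⁻¹ *ᵥ g) * (g ⬝ᵥ M *ᵥ g) := by
  have hs : ∀ x, 0 ≤ toBilin' M x x := fun x => by
    simpa [toBilin'_apply'] using hM.posSemidef.dotProduct_mulVec_nonneg x
  have hcs := LinearMap.BilinForm.apply_mul_apply_le_of_forall_zero_le _ hs (M⁻¹ *ᵥ g) g
  have hsymm := (isHermitian_iff_isSymm.mp hM.isHermitian).dotProduct_mulVec_comm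
  simp only [toBilin'_apply', hsymm _ g, mulVec_nonsing_inv_mulVec (hM.isUnit.map detMonoidHom),
    dotProduct_comm _ g] at hcs
  simpa [sq] using hcs

theorem PosDef.mul_dotProduct_self_le {M : Matrix ι ι ℝ} (hM : M.PosDef) {η : ℝ} (hη : 0 ≤ η)
    (hηM : ∀ x, η * (x ⬝ᵥ M *ᵥ x) ≤ x ⬝ᵥ x) (g : ι → ℝ) :
    η * (g ⬝ᵥ g) ≤ g ⬝ᵥ M⁻¹ *ᵥ g := by
  have hinv : 0 ≤ g ⬝ᵥ M⁻¹ *ᵥ g := by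
    simpa using hM.inv.posSemidef.dotProduct_mulVec_nonneg g
  have hgg : 0 ≤ g ⬝ᵥ g := by simpa using dotProduct_self_star_nonneg g
  rcases hgg.eq_or_lt with hgg | hgg
  · rwa [← hgg, mul_zero]
  · nlinarith [hηM g, hM.sq_dotProduct_self_le g]

end Matrix

open Matrix

section Dogleg

variable {ι : Type*} [Fintype ι]

theorem quadratic_smul_le_surrogate_smul (M : Matrix ι ι ℝ) {g d : ι → ℝ} (hgd : g ⬝ᵥ d < 0)
    (hcurv : g ⬝ᵥ d + d ⬝ᵥ M *ᵥ d ≤ 0) (β : ℝ) :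
    g ⬝ᵥ (β • d) + 1 / 2 * ((β • d) ⬝ᵥ M *ᵥ (β • d)) ≤
      (((g ⬝ᵥ d) / (d ⬝ᵥ d)) • d) ⬝ᵥ (β • d) +
        1 / (2 * (-(d ⬝ᵥ d) / (g ⬝ᵥ d))) * ((β • d) ⬝ᵥ (β • d)) := by
  have hd : d ⬝ᵥ d ≠ 0 := by
    rintro h
    rw [dotProduct_self_eq_zero.mp h, dotProduct_zero] at hgd
    exact hgd.false
  simp only [mulVec_smul, dotProduct_smul, smul_dotProduct, smul_eq_mul]
  field_simp
  nlinarith [sq_nonneg β]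

variable [DecidableEq ι]

/-- The paper's `d(μ)`: `μ = 1` gives the gradient step `-η g`, `μ = 2` the Newton step
`-M⁻¹ g`. -/
noncomputable def doglegDir (M : Matrix ι ι ℝ) (g : ι → ℝ) (η μ : ℝ) : ι → ℝ :=
  -(η • g) + (μ - 1) • (-(M⁻¹ *ᵥ g) + η • g)

theorem dotProduct_doglegDir (M : Matrix ι ι ℝ) (g : ι → ℝ) (η μ : ℝ) :
    g ⬝ᵥ doglegDir M g η μ = -((2 - μ) * η * (g ⬝ᵥ g) + (μ - 1) * (g ⬝ᵥ M⁻¹ *ᵥ g)) := by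
  simp only [doglegDir, dotProduct_add, dotProduct_neg, dotProduct_smul, smul_eq_mul]
  ring

theorem dotProduct_doglegDir_add_dotProduct_mulVec {M : Matrix ι ι ℝ} (hM : M.IsSymm)
    (hdet : IsUnit M.det) (g : ι → ℝ) (η μ : ℝ) :
    g ⬝ᵥ doglegDir M g η μ + doglegDir M g η μ ⬝ᵥ M *ᵥ doglegDir M g η μ =
      (2 - μ) * ((2 - μ) * η * (η * (g ⬝ᵥ M *ᵥ g) - g ⬝ᵥ g) +
        (μ - 1) * (η * (g ⬝ᵥ g) - g ⬝ᵥ M⁻¹ *ᵥ g)) := by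
  simp only [doglegDir, mulVec_add, mulVec_neg, mulVec_smul, mulVec_nonsing_inv_mulVec hdet,
    dotProduct_add, add_dotProduct, dotProduct_neg, neg_dotProduct, dotProduct_smul,
    smul_dotProduct, smul_eq_mul, hM.dotProduct_mulVec_comm (M⁻¹ *ᵥ g) g,
    dotProduct_comm (M⁻¹ *ᵥ g) g]
  ring

theorem dotProduct_doglegDir_neg {M : Matrix ι ι ℝ} (hM : M.PosDef) {g : ι → ℝ} (hg : g ≠ 0)
    {η μ : ℝ} (hη : 0 ≤ η) (hμ : μ ∈ Set.Ioc 1 2) : g ⬝ᵥ doglegDir M g η μ < 0 := by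
  have hinv : 0 < g ⬝ᵥ M⁻¹ *ᵥ g := by simpa using hM.inv.dotProduct_mulVec_pos hg
  have hgg : 0 ≤ g ⬝ᵥ g := by simpa using dotProduct_self_star_nonneg g
  rw [dotProduct_doglegDir, neg_neg_iff_pos]
  have h₁ : 0 ≤ (2 - μ) * η * (g ⬝ᵥ g) := by
    have := hμ.2
    positivity
  have h₂ : 0 < (μ - 1) * (g ⬝ᵥ M⁻¹ *ᵥ g) := mul_pos (by linarith [hμ.1]) hinv
  linarith

theorem dotProduct_doglegDir_add_dotProduct_mulVec_nonpos {M : Matrix ι ι ℝ} (hM : M.PosDef)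
    (g : ι → ℝ) {η μ : ℝ} (hη : 0 ≤ η) (hηM : ∀ x, η * (x ⬝ᵥ M *ᵥ x) ≤ x ⬝ᵥ x)
    (hμ : μ ∈ Set.Icc 1 2) :
    g ⬝ᵥ doglegDir M g η μ + doglegDir M g η μ ⬝ᵥ M *ᵥ doglegDir M g η μ ≤ 0 := by
  rw [dotProduct_doglegDir_add_dotProduct_mulVec (isHermitian_iff_isSymm.mp hM.isHermitian)
    (hM.isUnit.map detMonoidHom)]
  have h₁ := hηM g
  have h₂ := hM.mul_dotProduct_self_le hη hηM g
  have h₃ : 0 ≤ 2 - μ := by linarith [hμ.2]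
  have h₄ : 0 ≤ μ - 1 := by linarith [hμ.1]
  refine mul_nonpos_of_nonneg_of_nonpos h₃ (add_nonpos ?_ ?_)
  · exact mul_nonpos_of_nonneg_of_nonpos (by positivity) (by linarith)
  · exact mul_nonpos_of_nonneg_of_nonpos h₄ (by linarith)

end Dogleg

theorem opportunistic_majorization_on_line_general {n : ℕ}
    (M : Matrix (Fin n) (Fin n) ℝ) (hM : M.IsHermitian) (hpd : M.PosDef)
    (g : Fin n → ℝ) (hg : g ≠ 0)
    (η : ℝ) (hη : η ∈ Set.Ioo (0 : ℝ) (1 / (⨆ i, hM.eigenvalues i)))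
    (d : ℝ → (Fin n → ℝ))
    (hd : ∀ μ ∈ Set.Ioc (1 : ℝ) 2,
      d μ = -(η • g) + (μ - 1) • (-(M⁻¹.mulVec g) + η • g))
    (s : (Fin n → ℝ) → ℝ)
    (hsdef : ∀ x : Fin n → ℝ, s x = g ⬝ᵥ x + (1 / 2) * (x ⬝ᵥ M.mulVec x)) :
    ∀ μ ∈ Set.Ioc (1 : ℝ) 2,
      ∀ (gμ : Fin n → ℝ) (ημ : ℝ) (mμ : (Fin n → ℝ) → ℝ),
        gμ = ((g ⬝ᵥ d μ) / (d μ ⬝ᵥ d μ)) • d μ →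
        ημ = -(d μ ⬝ᵥ d μ) / (g ⬝ᵥ d μ) →
        (∀ x : Fin n → ℝ, mμ x = gμ ⬝ᵥ x + (1 / (2 * ημ)) * (x ⬝ᵥ x)) →
        ∀ β : ℝ, s (β • d μ) ≤ mμ (β • d μ) := by
  intro μ hμ gμ ημ mμ hgμ hημ hmμ β
  obtain ⟨hη₀, hη₁⟩ := hη
  have hηM : ∀ x, η * (x ⬝ᵥ M *ᵥ x) ≤ x ⬝ᵥ x := by
    have hL : 0 < ⨆ i, hM.eigenvalues i := one_div_pos.mp (hη₀.trans hη₁)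
    refine hM.mul_dotProduct_mulVec_le_dotProduct_self hη₀.le ?_
    rw [lt_div_iff₀ hL] at hη₁
    exact hη₁.le
  rw [hsdef, hmμ, hgμ, hημ, hd μ hμ]
  exact quadratic_smul_le_surrogate_smul M (dotProduct_doglegDir_neg hpd hg hη₀.le hμ)
    (dotProduct_doglegDir_add_dotProduct_mulVec_nonpos hpd g hη₀.le hηM
      (Set.Ioc_subset_Icc_self hμ)) β

/-- Theorem 3.1, opportunistic majorization along the dogleg
line: for any `μ ∈ (1,2]`, the surrogate `m_μ` majorizes
`s(x) = ⟨g,x⟩ + ½ xᵀMx` on the line `{βd(μ) : β ∈ ℝ}`. -/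
theorem opportunistic_majorization_on_line {n : ℕ} [NeZero n]
    (M : Matrix (Fin n) (Fin n) ℝ) (hM : M.IsHermitian) (hpd : M.PosDef)
    (g : Fin n → ℝ) (hg : g ≠ 0)
    (η : ℝ) (hη : η ∈ Set.Ioo (0 : ℝ) (1 / (⨆ i, hM.eigenvalues i)))
    (d : ℝ → (Fin n → ℝ))
    (hd : ∀ μ ∈ Set.Ioc (1 : ℝ) 2,
      d μ = -(η • g) + (μ - 1) • (-(M⁻¹.mulVec g) + η • g))
    (s : (Fin n → ℝ) → ℝ)
    (hsdef : ∀ x : Fin n → ℝ, s x = g ⬝ᵥ x + (1 / 2) * (x ⬝ᵥ M.mulVec x)) :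
    ∀ μ ∈ Set.Ioc (1 : ℝ) 2,
      ∀ (gμ : Fin n → ℝ) (ημ : ℝ) (mμ : (Fin n → ℝ) → ℝ),
        gμ = ((g ⬝ᵥ d μ) / (d μ ⬝ᵥ d μ)) • d μ →
        ημ = -(d μ ⬝ᵥ d μ) / (g ⬝ᵥ d μ) →
        (∀ x : Fin n → ℝ, mμ x = gμ ⬝ᵥ x + (1 / (2 * ημ)) * (x ⬝ᵥ x)) →
        ∀ β : ℝ, s (β • d μ) ≤ mμ (β • d μ) :=
  opportunistic_majorization_on_line_general M hM hpd g hg η hη d hd s hsdef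
end

section
/- Let θ ∈ [0, 1/2), C > 0, and define φ(t) = (C/(1-2θ)) t^{2θ-1} for t > 0. Let (R_k) be a positive nonincreasing sequence with R_{k+1}^{2θ-2}(R_k - R_{k+1}) ≥ β_{k+1} for positive β_k with β_k ≤ β̄. Then there exists c > 0 such that φ(R_{k+1}) - φ(R_k) ≥ c β_{k+1} for all k ≥ k₀, and consequently R_{k+1} ≤ D (∑_{n=k₀}^{k} β_{n+1})^{-1/(1-2θ)} for an appropriate constant D > 0. -/
/-!
Write `α = 2θ - 1 < 0`, so that `φ t = A t^α` with `A = C / (-α)`, and the recursion reads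
`β_{k+1} ≤ R_{k+1}^{α-1} (R_k - R_{k+1})`; in particular `R` is nonincreasing from `k₀` on.
If `R_{k+1} ≥ R_k / 2`, the tangent line of the convex function `t^α` at `R_k` gives
`φ(R_{k+1}) - φ(R_k) ≥ C R_k^{α-1} (R_k - R_{k+1}) ≥ C 2^{α-1} β_{k+1}`.
If `R_{k+1} < R_k / 2`, then `R_{k+1}^α ≥ 2^{-α} R_k^α`, so the increment is at least
`A (2^{-α} - 1) R_{k₀}^α ≥ A (2^{-α} - 1) R_{k₀}^α β_{k+1} / β̄`.
Telescoping gives `c ∑ β_{n+1} ≤ φ(R_{k+1}) = A R_{k+1}^α`, and taking the `1/α`-th power,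
which reverses inequalities, gives the rate.
-/

open Real Set

namespace Real

theorem neg_mul_rpow_sub_one_mul_sub_le_rpow_sub_rpow {α a b : ℝ} (hα : α ≤ 0) (hb : 0 < b)
    (hba : b ≤ a) : -α * a ^ (α - 1) * (a - b) ≤ b ^ α - a ^ α := by
  have hpos : ∀ t ∈ Icc b a, 0 < t := fun t ht => hb.trans_le ht.1
  have hderiv :
      ∀ t ∈ interior (Icc b a), deriv (fun t : ℝ => t ^ α) t ≤ α * a ^ (α - 1) := by
    intro t ht
    rw [interior_Icc] at ht
    rw [deriv_rpow_const]
    exact mul_le_mul_of_nonpos_left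
      (rpow_le_rpow_of_nonpos (hb.trans ht.1) ht.2.le (by linarith)) hα
  have := (convex_Icc b a).image_sub_le_mul_sub_of_deriv_le
    (fun t ht => (continuousAt_rpow_const _ _ (Or.inl (hpos t ht).ne')).continuousWithinAt)
    (fun t ht => (differentiableAt_rpow_const_of_ne _
      (hpos t (interior_subset ht)).ne').differentiableWithinAt)
    hderiv b (left_mem_Icc.2 hba) a (right_mem_Icc.2 hba) hba
  linarith

theorem neg_mul_two_rpow_mul_le_rpow_sub_rpow {α a b : ℝ} (hα : α ≤ 0) (hb : 0 < b)
    (hab : a / 2 ≤ b) (hba : b ≤ a) :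
    -α * 2 ^ (α - 1) * (b ^ (α - 1) * (a - b)) ≤ b ^ α - a ^ α := by
  have hb' : 2 ^ (α - 1) * b ^ (α - 1) ≤ a ^ (α - 1) := by
    calc 2 ^ (α - 1) * b ^ (α - 1) ≤ 2 ^ (α - 1) * (a / 2) ^ (α - 1) :=
          mul_le_mul_of_nonneg_left (rpow_le_rpow_of_nonpos (by linarith) hab (by linarith))
            (rpow_nonneg zero_le_two _)
      _ = a ^ (α - 1) := by
          rw [← mul_rpow zero_le_two (by linarith)]
          ring_nf
  calc -α * 2 ^ (α - 1) * (b ^ (α - 1) * (a - b))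
      = -α * (2 ^ (α - 1) * b ^ (α - 1)) * (a - b) := by ring
    _ ≤ -α * a ^ (α - 1) * (a - b) :=
      mul_le_mul_of_nonneg_right (mul_le_mul_of_nonneg_left hb' (by linarith)) (by linarith)
    _ ≤ b ^ α - a ^ α := neg_mul_rpow_sub_one_mul_sub_le_rpow_sub_rpow hα hb hba

theorem two_rpow_neg_sub_one_mul_le_rpow_sub_rpow {α a b r : ℝ} (hα : α ≤ 0) (hb : 0 < b)
    (hba : b ≤ a / 2) (har : a ≤ r) : (2 ^ (-α) - 1) * r ^ α ≤ b ^ α - a ^ α := by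
  have ha : 0 < a := by linarith
  have hbα : a ^ α * 2 ^ (-α) ≤ b ^ α := by
    calc a ^ α * 2 ^ (-α) = (a / 2) ^ α := by
          rw [div_rpow ha.le zero_le_two, rpow_neg zero_le_two, div_eq_mul_inv]
      _ ≤ b ^ α := rpow_le_rpow_of_nonpos hb hba hα
  have h2 : 0 ≤ (2 : ℝ) ^ (-α) - 1 := sub_nonneg.2 (one_le_rpow one_le_two (neg_nonneg.2 hα))
  calc (2 ^ (-α) - 1) * r ^ α ≤ (2 ^ (-α) - 1) * a ^ α :=
        mul_le_mul_of_nonneg_left (rpow_le_rpow_of_nonpos ha har hα) h2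
    _ ≤ b ^ α - a ^ α := by linarith

end Real

/-- The constants of the cases `b ≥ a / 2` and `b < a / 2` of the one-step estimate
`descentConst_mul_le_rpow_sub_rpow`. -/
noncomputable def descentConst (α r xbar : ℝ) : ℝ :=
  min (-α * 2 ^ (α - 1)) ((2 ^ (-α) - 1) * r ^ α / xbar)

theorem descentConst_pos {α r xbar : ℝ} (hα : α < 0) (hr : 0 < r) (hxbar : 0 < xbar) :
    0 < descentConst α r xbar := by
  have h2 : (1 : ℝ) < 2 ^ (-α) := one_lt_rpow one_lt_two (neg_pos.2 hα)
  exact lt_min (mul_pos (neg_pos.2 hα) (rpow_pos_of_pos two_pos _))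
    (div_pos (mul_pos (sub_pos.2 h2) (rpow_pos_of_pos hr _)) hxbar)

theorem descentConst_mul_le_rpow_sub_rpow {α a b r x xbar : ℝ} (hα : α ≤ 0)
    (hb : 0 < b) (har : a ≤ r) (hx : 0 < x) (hxbar : x ≤ xbar)
    (hrec : x ≤ b ^ (α - 1) * (a - b)) :
    descentConst α r xbar * x ≤ b ^ α - a ^ α := by
  rcases le_or_gt (a / 2) b with hab | hba
  · have hba : b ≤ a := sub_nonneg.1 <|
      (pos_of_mul_pos_right (hx.trans_le hrec) (rpow_pos_of_pos hb _).le).le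
    calc descentConst α r xbar * x ≤ -α * 2 ^ (α - 1) * (b ^ (α - 1) * (a - b)) :=
          mul_le_mul (min_le_left _ _) hrec hx.le
            (mul_nonneg (neg_nonneg.2 hα) (rpow_nonneg zero_le_two _))
      _ ≤ b ^ α - a ^ α := neg_mul_two_rpow_mul_le_rpow_sub_rpow hα hb hab hba
  · have hr : 0 ≤ r ^ α := rpow_nonneg (by linarith) _
    have h2 : (1 : ℝ) ≤ 2 ^ (-α) := one_le_rpow one_le_two (neg_nonneg.2 hα)
    calc descentConst α r xbar * x ≤ (2 ^ (-α) - 1) * r ^ α / xbar * xbar :=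
          mul_le_mul (min_le_right _ _) hxbar hx.le
            (div_nonneg (mul_nonneg (by linarith) hr) (by linarith))
      _ = (2 ^ (-α) - 1) * r ^ α := div_mul_cancel₀ _ (hx.trans_le hxbar).ne'
      _ ≤ b ^ α - a ^ α := two_rpow_neg_sub_one_mul_le_rpow_sub_rpow hα hb hba.le har

theorem Finset.sum_Icc_le_sub_of_le_sub_succ {f g : ℕ → ℝ} {m k : ℕ}
    (h : ∀ n, m ≤ n → g (n + 1) ≤ f (n + 1) - f n) (hmk : m ≤ k) :
    ∑ n ∈ Finset.Icc m k, g (n + 1) ≤ f (k + 1) - f m := by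
  rw [← Finset.sum_Icc_sub hmk f]
  exact Finset.sum_le_sum fun n hn => h n (Finset.mem_Icc.1 hn).1

theorem kl_sublinear_rate_general
    (θ C : ℝ) (hθ : θ ∈ Set.Ico (0 : ℝ) (1 / 2)) (hC : 0 < C)
    (φ : ℝ → ℝ) (hφ : ∀ t : ℝ, 0 < t → φ t = C / (1 - 2 * θ) * t ^ (2 * θ - 1))
    (R β : ℕ → ℝ) (k₀ : ℕ) (βbar : ℝ)
    (hRpos : ∀ k, 0 < R k)
    (hβpos : ∀ k, 0 < β k) (hβle : ∀ k, β k ≤ βbar)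
    (hrec : ∀ k, k₀ ≤ k → β (k + 1) ≤ R (k + 1) ^ (2 * θ - 2) * (R k - R (k + 1))) :
    ∃ c : ℝ, 0 < c ∧ (∀ k, k₀ ≤ k → c * β (k + 1) ≤ φ (R (k + 1)) - φ (R k)) ∧
      ∃ D : ℝ, 0 < D ∧ ∀ k, k₀ ≤ k →
        R (k + 1) ≤ D * (∑ n ∈ Finset.Icc k₀ k, β (n + 1)) ^ (-(1 / (1 - 2 * θ))) := by
  set α := 2 * θ - 1
  have hα : α < 0 := by linarith [hθ.2]
  set A := C / (1 - 2 * θ)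
  have hA : 0 < A := div_pos hC (by linarith)
  simp only [show 2 * θ - 2 = α - 1 by ring] at hrec
  have hR_anti : AntitoneOn R (Ici k₀) := antitoneOn_nat_Ici_of_succ_le fun n hn =>
    sub_nonneg.1 (pos_of_mul_pos_right ((hβpos _).trans_le (hrec n hn))
      (rpow_pos_of_pos (hRpos _) _).le).le
  set κ := descentConst α (R k₀) βbar
  have hκ : 0 < κ := descentConst_pos hα (hRpos k₀) ((hβpos 0).trans_le (hβle 0))
  have hstep : ∀ k, k₀ ≤ k → A * κ * β (k + 1) ≤ φ (R (k + 1)) - φ (R k) := by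
    intro k hk
    rw [hφ _ (hRpos _), hφ _ (hRpos _), mul_assoc, ← mul_sub]
    exact mul_le_mul_of_nonneg_left (descentConst_mul_le_rpow_sub_rpow hα.le (hRpos _)
      (hR_anti self_mem_Ici hk hk) (hβpos _) (hβle _) (hrec k hk)) hA.le
  refine ⟨A * κ, mul_pos hA hκ, hstep, κ ^ α⁻¹, rpow_pos_of_pos hκ _, fun k hk => ?_⟩
  set S := ∑ n ∈ Finset.Icc k₀ k, β (n + 1)
  have hS : 0 < S := Finset.sum_pos (fun n _ => hβpos _) (Finset.nonempty_Icc.2 hk)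
  have htel : A * (κ * S) ≤ A * R (k + 1) ^ α - A * R k₀ ^ α := by
    have := Finset.sum_Icc_le_sub_of_le_sub_succ (f := fun n => φ (R n))
      (g := fun n => A * κ * β n) hstep hk
    rwa [← Finset.mul_sum, hφ _ (hRpos _), hφ _ (hRpos _), mul_assoc] at this
  have hκS : κ * S ≤ R (k + 1) ^ α := le_of_mul_le_mul_left
    (htel.trans (sub_le_self _ (mul_pos hA (rpow_pos_of_pos (hRpos _) _)).le)) hA
  rw [show -(1 / (1 - 2 * θ)) = α⁻¹ by rw [show α = -(1 - 2 * θ) by ring, inv_neg, one_div],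
    ← mul_rpow hκ.le hS.le]
  exact (le_rpow_inv_iff_of_neg (hRpos _) (mul_pos hκ hS) hα).2 hκS

/-- Statement 16 (sublinear rate, case `θ ∈ [0,1/2)`): with
`φ(t) = (C/(1-2θ)) t^{2θ-1}` and the recursion
`R_{k+1}^{2θ-2}(R_k - R_{k+1}) ≥ β_{k+1}` for positive `β_k ≤ β̄`, there is
`c > 0` with `φ(R_{k+1}) - φ(R_k) ≥ c β_{k+1}` for `k ≥ k₀`, and hence
`R_{k+1} ≤ D (∑_{n=k₀}^k β_{n+1})^{-1/(1-2θ)}` for some `D > 0`. -/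
theorem kl_sublinear_rate
    (θ C : ℝ) (hθ : θ ∈ Set.Ico (0 : ℝ) (1 / 2)) (hC : 0 < C)
    (φ : ℝ → ℝ) (hφ : ∀ t : ℝ, 0 < t → φ t = C / (1 - 2 * θ) * t ^ (2 * θ - 1))
    (R β : ℕ → ℝ) (k₀ : ℕ) (βbar : ℝ)
    (hRpos : ∀ k, 0 < R k) (hmono : ∀ k, R (k + 1) ≤ R k)
    (hβpos : ∀ k, 0 < β k) (hβle : ∀ k, β k ≤ βbar)
    (hrec : ∀ k, k₀ ≤ k → β (k + 1) ≤ R (k + 1) ^ (2 * θ - 2) * (R k - R (k + 1))) :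
    ∃ c : ℝ, 0 < c ∧ (∀ k, k₀ ≤ k → c * β (k + 1) ≤ φ (R (k + 1)) - φ (R k)) ∧
      ∃ D : ℝ, 0 < D ∧ ∀ k, k₀ ≤ k →
        R (k + 1) ≤ D * (∑ n ∈ Finset.Icc k₀ k, β (n + 1)) ^ (-(1 / (1 - 2 * θ))) :=
  kl_sublinear_rate_general θ C hθ hC φ hφ R β k₀ βbar hRpos hβpos hβle hrec
end
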